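/- (Lemma 1) Let λ ≥ 0, let θ ∈ ℝ^d, let Σ be positive definite, and let Y ⊆ ℝ^m. Suppose θ − θ* ∈ S(λ, Y; Σ), and suppose x₁ is an optimal solution of the robust optimization problem with scale λ, center θ and shape Σ, x₂ is an optimal solution of the robust optimization problem with scale 2λ, center θ* and shape Σ, and x₁, x₂ ∈ Y. Then f*(x₁) ≤ f*(x₂). -/

import Mathlib

open MeasureTheory ProbabilityTheory Matrix
open scoped ENNReal Pointwise

/-- The ellipsoid `U_Σ = {u : uᵀ Σ⁻¹ u ≤ 1}`. -/
def USet {d : ℕ} (Sg : Matrix (Fin d) (Fin d) ℝ) : Set (Fin d → ℝ) :=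
  {u | u ⬝ᵥ (Sg⁻¹ *ᵥ u) ≤ 1}

/-- `r_k(x; Σ) = max_{u ∈ U_Σ} g_k(x, u)` where `g_k(x, θ) = θᵀ v_k(x)`. -/
noncomputable def rk {d m K : ℕ} (v : Fin K → (Fin m → ℝ) → (Fin d → ℝ))
    (k : Fin K) (x : Fin m → ℝ) (Sg : Matrix (Fin d) (Fin d) ℝ) : ℝ :=
  sSup ((fun u => u ⬝ᵥ v k x) '' USet Sg)

/-- `S(λ, Y; Σ)`, the set of parameter errors that are uniformly small over `Y`. -/
noncomputable def SErr {d m K : ℕ} (v : Fin K → (Fin m → ℝ) → (Fin d → ℝ))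
    (lam : ℝ) (Y : Set (Fin m → ℝ)) (Sg : Matrix (Fin d) (Fin d) ℝ) : Set (Fin d → ℝ) :=
  {Δ | ∀ k, ∀ y ∈ Y, |Δ ⬝ᵥ v k y| ≤ lam * rk v k y Sg}

/-- Feasibility for the robust optimization problem with scale `lam`, center `θ`, shape `Σ`. -/
def Feasible {d m K : ℕ} (X : Set (Fin m → ℝ)) (v : Fin K → (Fin m → ℝ) → (Fin d → ℝ))
    (lam : ℝ) (θ : Fin d → ℝ) (Sg : Matrix (Fin d) (Fin d) ℝ) (x : Fin m → ℝ) : Prop :=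
  x ∈ X ∧ ∀ k, ∀ u ∈ USet Sg, 0 ≤ (θ + lam • u) ⬝ᵥ v k x

/-- Optimal solution of the robust optimization problem. -/
def IsOptimal {d m K : ℕ} (X : Set (Fin m → ℝ)) (f : (Fin m → ℝ) → ℝ)
    (v : Fin K → (Fin m → ℝ) → (Fin d → ℝ))
    (lam : ℝ) (θ : Fin d → ℝ) (Sg : Matrix (Fin d) (Fin d) ℝ) (x : Fin m → ℝ) : Prop :=
  Feasible X v lam θ Sg x ∧ ∀ y, Feasible X v lam θ Sg y → f x ≤ f y

open Classical in
/-- The true objective `f*`, which is `∞` when a true constraint is violated. -/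
noncomputable def fStar {d m K : ℕ} (f : (Fin m → ℝ) → ℝ)
    (v : Fin K → (Fin m → ℝ) → (Fin d → ℝ)) (θs : Fin d → ℝ) (x : Fin m → ℝ) : EReal :=
  if ∀ k, 0 ≤ θs ⬝ᵥ v k x then (f x : EReal) else ⊤

/-- The standard Gaussian measure on `ℝ^d`. -/
noncomputable def stdGaussian (d : ℕ) : Measure (Fin d → ℝ) :=
  Measure.pi fun _ => gaussianReal 0 1

open Classical in
/-- The positive semidefinite square root (junk value `0` off the psd cone). -/
noncomputable def matSqrt {d : ℕ} (A : Matrix (Fin d) (Fin d) ℝ) : Matrix (Fin d) (Fin d) ℝ :=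
  if h : A.PosSemidef then
    (h.1.eigenvectorUnitary : Matrix (Fin d) (Fin d) ℝ) *
      diagonal ((↑) ∘ (fun x : ℝ => Real.sqrt x) ∘ h.1.eigenvalues) *
      (star h.1.eigenvectorUnitary : Matrix (Fin d) (Fin d) ℝ)
  else 0

/-- The centered Gaussian measure on `ℝ^d` with covariance `A`. -/
noncomputable def gaussOf {d : ℕ} (A : Matrix (Fin d) (Fin d) ℝ) : Measure (Fin d → ℝ) :=
  (stdGaussian d).map (fun z => matSqrt A *ᵥ z)

/-- The Euclidean norm on `Fin d → ℝ`. -/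
noncomputable def euclNorm {d : ℕ} (z : Fin d → ℝ) : ℝ := Real.sqrt (∑ i, z i ^ 2)

/-- Quantile function of the chi distribution with `d` degrees of freedom. -/
noncomputable def chiQuantile (d : ℕ) (p : ℝ) : ℝ :=
  sInf {t : ℝ | 0 ≤ t ∧ p ≤ (stdGaussian d {z | euclNorm z ≤ t}).toReal}

/-- The minimum spatial uniform bound `μ(p, Y; P, Σ)` (`⊤` when infeasible, `0` for `p ≤ 0`). -/
noncomputable def muB {d m K : ℕ} (v : Fin K → (Fin m → ℝ) → (Fin d → ℝ)) (p : ℝ)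
    (Y : Set (Fin m → ℝ)) (P : Measure (Fin d → ℝ)) (Sg : Matrix (Fin d) (Fin d) ℝ) : ℝ≥0∞ :=
  ⨅ (μ : ℝ) (_ : 0 ≤ μ ∧ ENNReal.ofReal p ≤ P (SErr v μ Y Sg)), ENNReal.ofReal μ

/-!
A constraint that holds robustly with scale `λ` around `θ` satisfies `g_k(x, θ) ≥ λ r_k(x; Σ)`
(test it at `-u` for every `u ∈ U_Σ`, which `U_Σ` contains by symmetry). On `Y` the error
`θ − θ*` moves each `g_k` by at most `λ r_k`, so `x₁` satisfies the true constraints, and every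
point of `Y` that is `2λ`-robustly feasible around `θ*` is `λ`-robustly feasible around `θ`;
hence `x₂` competes in the problem solved by `x₁`.
-/

section RobustFeasibility

variable {d m K : ℕ} {v : Fin K → (Fin m → ℝ) → (Fin d → ℝ)} {Sg : Matrix (Fin d) (Fin d) ℝ}

lemma zero_mem_USet (Sg : Matrix (Fin d) (Fin d) ℝ) : (0 : Fin d → ℝ) ∈ USet Sg := by
  simp [USet]

lemma neg_mem_USet {u : Fin d → ℝ} (hu : u ∈ USet Sg) : -u ∈ USet Sg := by
  simpa [USet, Matrix.mulVec_neg] using hu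

lemma add_smul_dotProduct (θ u w : Fin d → ℝ) (lam : ℝ) :
    (θ + lam • u) ⬝ᵥ w = θ ⬝ᵥ w + lam * (u ⬝ᵥ w) := by
  rw [add_dotProduct, smul_dotProduct, smul_eq_mul]

/-- No boundedness of `U_Σ` is needed: `Real.sSup_le` also covers the junk value `sSup = 0`. -/
lemma mul_rk_le {k : Fin K} {x : Fin m → ℝ} {lam c : ℝ} (hlam : 0 ≤ lam) (hc : 0 ≤ c)
    (h : ∀ u ∈ USet Sg, lam * (u ⬝ᵥ v k x) ≤ c) : lam * rk v k x Sg ≤ c := by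
  rcases hlam.eq_or_lt with rfl | hpos
  · simpa using hc
  · rw [mul_comm, ← le_div_iff₀ hpos]
    refine Real.sSup_le ?_ (by positivity)
    rintro s ⟨u, hu, rfl⟩
    rw [le_div_iff₀ hpos, mul_comm]
    exact h u hu

lemma mul_rk_le_of_robust {k : Fin K} {x : Fin m → ℝ} {lam : ℝ} {θ : Fin d → ℝ}
    (hlam : 0 ≤ lam) (hrob : ∀ u ∈ USet Sg, 0 ≤ (θ + lam • u) ⬝ᵥ v k x) :
    lam * rk v k x Sg ≤ θ ⬝ᵥ v k x := by
  have hnom : 0 ≤ θ ⬝ᵥ v k x := by simpa using hrob 0 (zero_mem_USet Sg)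
  refine mul_rk_le hlam hnom fun u hu => ?_
  have := hrob (-u) (neg_mem_USet hu)
  rw [add_smul_dotProduct, neg_dotProduct] at this
  linarith

lemma abs_sub_dotProduct_le {lam : ℝ} {Y : Set (Fin m → ℝ)} {θ θ' : Fin d → ℝ}
    (hθ : θ - θ' ∈ SErr v lam Y Sg) (k : Fin K) {y : Fin m → ℝ} (hy : y ∈ Y) :
    |θ ⬝ᵥ v k y - θ' ⬝ᵥ v k y| ≤ lam * rk v k y Sg := by
  simpa [sub_dotProduct] using hθ k y hy

lemma Feasible.nonneg_of_sub_mem_SErr {X Y : Set (Fin m → ℝ)} {lam : ℝ} {θ θ' : Fin d → ℝ}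
    {x : Fin m → ℝ} (hx : Feasible X v lam θ Sg x) (hlam : 0 ≤ lam)
    (hθ : θ - θ' ∈ SErr v lam Y Sg) (hxY : x ∈ Y) (k : Fin K) : 0 ≤ θ' ⬝ᵥ v k x := by
  have hrk := mul_rk_le_of_robust hlam (hx.2 k)
  have herr := (abs_le.mp (abs_sub_dotProduct_le hθ k hxY)).2
  linarith

lemma Feasible.of_two_mul_of_sub_mem_SErr {X Y : Set (Fin m → ℝ)} {lam : ℝ}
    {θ θ' : Fin d → ℝ} {x : Fin m → ℝ} (hx : Feasible X v (2 * lam) θ' Sg x) (hlam : 0 ≤ lam)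
    (hθ : θ - θ' ∈ SErr v lam Y Sg) (hxY : x ∈ Y) : Feasible X v lam θ Sg x := by
  refine ⟨hx.1, fun k u hu => ?_⟩
  have hrk := mul_rk_le_of_robust (by positivity) (hx.2 k)
  have herr := (abs_le.mp (abs_sub_dotProduct_le hθ k hxY)).1
  have hrob := hx.2 k u hu
  rw [add_smul_dotProduct] at hrob ⊢
  linarith

end RobustFeasibility

lemma fStar_le_fStar {d m K : ℕ} {f : (Fin m → ℝ) → ℝ} {v : Fin K → (Fin m → ℝ) → (Fin d → ℝ)}
    {θs : Fin d → ℝ} {x₁ x₂ : Fin m → ℝ} (hx₁ : ∀ k, 0 ≤ θs ⬝ᵥ v k x₁) (hf : f x₁ ≤ f x₂) :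
    fStar f v θs x₁ ≤ fStar f v θs x₂ := by
  rw [fStar, if_pos hx₁, fStar]
  split
  · exact_mod_cast hf
  · exact le_top

theorem stmt3_general {d m K : ℕ}
    (θstar : Fin d → ℝ) (v : Fin K → (Fin m → ℝ) → (Fin d → ℝ))
    (X : Set (Fin m → ℝ)) (f : (Fin m → ℝ) → ℝ)
    (lam : ℝ) (hlam : 0 ≤ lam) (θ : Fin d → ℝ)
    (Sg : Matrix (Fin d) (Fin d) ℝ)
    (Y : Set (Fin m → ℝ))
    (hθ : θ - θstar ∈ SErr v lam Y Sg)
    (x₁ x₂ : Fin m → ℝ)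
    (h1 : IsOptimal X f v lam θ Sg x₁)
    (h2 : IsOptimal X f v (2 * lam) θstar Sg x₂)
    (hx₁Y : x₁ ∈ Y) (hx₂Y : x₂ ∈ Y) :
    fStar f v θstar x₁ ≤ fStar f v θstar x₂ := by
  have htrue₁ := h1.1.nonneg_of_sub_mem_SErr hlam hθ hx₁Y
  have hfeas₂ := h2.1.of_two_mul_of_sub_mem_SErr hlam hθ hx₂Y
  exact fStar_le_fStar htrue₁ (h1.2 x₂ hfeas₂)

/-- Lemma 1: the subspace version of Fact 1, with `θ − θ* ∈ S(λ, Y; Σ)` and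
the two optimal solutions lying in `Y`. -/
theorem stmt3 {d m K : ℕ} (hd : 1 ≤ d) (hm : 1 ≤ m) (hK : 1 ≤ K)
    (θstar : Fin d → ℝ) (v : Fin K → (Fin m → ℝ) → (Fin d → ℝ))
    (X : Set (Fin m → ℝ)) (f : (Fin m → ℝ) → ℝ)
    (lam : ℝ) (hlam : 0 ≤ lam) (θ : Fin d → ℝ)
    (Sg : Matrix (Fin d) (Fin d) ℝ) (hSg : Sg.PosDef)
    (Y : Set (Fin m → ℝ))
    (hθ : θ - θstar ∈ SErr v lam Y Sg)
    (x₁ x₂ : Fin m → ℝ)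
    (h1 : IsOptimal X f v lam θ Sg x₁)
    (h2 : IsOptimal X f v (2 * lam) θstar Sg x₂)
    (hx₁Y : x₁ ∈ Y) (hx₂Y : x₂ ∈ Y) :
    fStar f v θstar x₁ ≤ fStar f v θstar x₂ :=
  stmt3_general θstar v X f lam hlam θ Sg Y hθ x₁ x₂ h1 h2 hx₁Y hx₂Y
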